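/- arXiv:2502.10442 — 2 statements merged into one kernel-verified Lean document; each statement's English description precedes it below -/
import Mathlib

section
/- Let A = [A₁ A₂] ∈ ℝ^{n×(d + k)} be a block matrix where A₁ ∈ ℝ^{n×d} has full column rank and A₂ ∈ ℝ^{n×k}, with d ≤ n and AA^⊤ invertible. Then the first diagonal entry of the orthogonal projection onto the row space of A satisfies e₁^⊤ A^⊤(AA^⊤)^{-1}A e₁ ≥ s_min(A₁)² / (s_min(A₁)² + s_max(A₂)²), where s_min(A₁) is the smallest singular value of A₁, s_max(A₂) is the largest singular value of A₂, and e₁ is the first standard basis vector. -/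
/-!
Write `M = AAᵀ` and `v = A e₁ = A₁ e₁`. For every `x`, Cauchy–Schwarz for the form of `M` gives
`(v ⬝ x)² ≤ (v ⬝ M⁻¹ v) (x ⬝ M x)`, where `x ⬝ M x = |A₁ᵀx|² + |A₂ᵀx|²`. Take for `x` the
least-norm solution `A₁(A₁ᵀA₁)⁻¹e₁` of `A₁ᵀx = e₁`: then `v ⬝ x = 1`, `s_min(A₁)² |x|² ≤ 1` and
`|A₂ᵀx|² ≤ s_max(A₂)² |x|²`, whence `1 ≤ (v ⬝ M⁻¹ v)(1 + s_max(A₂)² / s_min(A₁)²)`.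
If `s_min(A₁) = 0` the bound is trivial, as `M⁻¹` is positive semidefinite.
-/

open Matrix

section

variable {m n : Type*} [Fintype m] [Fintype n]

lemma sq_dotProduct_le_dotProduct_self_mul_dotProduct_self (u w : n → ℝ) :
    (u ⬝ᵥ w) ^ 2 ≤ (u ⬝ᵥ u) * (w ⬝ᵥ w) := by
  simpa only [dotProduct, sq] using Finset.sum_mul_sq_le_sq_mul_sq Finset.univ u w

lemma dotProduct_self_nonneg (u : n → ℝ) : 0 ≤ u ⬝ᵥ u :=
  Finset.sum_nonneg fun i _ => mul_self_nonneg (u i)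

lemma vecMul_dotProduct_vecMul (A : Matrix m n ℝ) (x y : m → ℝ) :
    (x ᵥ* A) ⬝ᵥ (y ᵥ* A) = x ⬝ᵥ ((A * Aᵀ) *ᵥ y) := by
  rw [← mulVec_mulVec, dotProduct_mulVec, mulVec_transpose]

lemma posSemidef_transpose_mul_self (A : Matrix m n ℝ) : (Aᵀ * A).PosSemidef := by
  simpa only [conjTranspose_eq_transpose_of_trivial] using posSemidef_conjTranspose_mul_self A

/-- With `u = (AAᵀ)⁻¹ v` one has `v ⬝ x = Aᵀu ⬝ Aᵀx` and `v ⬝ u = |Aᵀu|²`, so this is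
Cauchy–Schwarz for `Aᵀu` and `Aᵀx`. -/
lemma sq_dotProduct_le_dotProduct_inv_mulVec_mul [DecidableEq m] (A : Matrix m n ℝ)
    (hA : IsUnit (A * Aᵀ)) (v x : m → ℝ) :
    (v ⬝ᵥ x) ^ 2 ≤ (v ⬝ᵥ ((A * Aᵀ)⁻¹ *ᵥ v)) * ((x ᵥ* A) ⬝ᵥ (x ᵥ* A)) := by
  set u := (A * Aᵀ)⁻¹ *ᵥ v
  have hv : (A * Aᵀ) *ᵥ u = v := by
    rw [mulVec_mulVec, mul_nonsing_inv _ ((isUnit_iff_isUnit_det _).mp hA), one_mulVec]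
  have hvx : v ⬝ᵥ x = (u ᵥ* A) ⬝ᵥ (x ᵥ* A) := by
    rw [dotProduct_comm (u ᵥ* A), vecMul_dotProduct_vecMul, hv, dotProduct_comm]
  have hvu : v ⬝ᵥ u = (u ᵥ* A) ⬝ᵥ (u ᵥ* A) := by
    rw [vecMul_dotProduct_vecMul, hv, dotProduct_comm]
  rw [hvx, hvu]
  exact sq_dotProduct_le_dotProduct_self_mul_dotProduct_self _ _

namespace Matrix.IsHermitian

variable [DecidableEq n] {C : Matrix n n ℝ}

lemma exists_dotProduct_mulVec_eq_sum_eigenvalues (hC : C.IsHermitian) (x : n → ℝ) :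
    ∃ y : n → ℝ, x ⬝ᵥ (C *ᵥ x) = ∑ i, hC.eigenvalues i * y i ^ 2 ∧
      x ⬝ᵥ x = ∑ i, y i ^ 2 := by
  set U : Matrix n n ℝ := (hC.eigenvectorUnitary : Matrix n n ℝ)
  have hUstar : star U = Uᵀ := by
    rw [star_eq_conjTranspose, conjTranspose_eq_transpose_of_trivial]
  have hUU : U * Uᵀ = 1 := hUstar ▸ mem_unitaryGroup_iff.mp hC.eigenvectorUnitary.2
  refine ⟨Uᵀ *ᵥ x, ?_, ?_⟩
  · conv_lhs => rw [hC.spectral_theorem, Unitary.conjStarAlgAut_apply]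
    rw [hUstar, ← mulVec_mulVec, ← mulVec_mulVec, dotProduct_mulVec, ← mulVec_transpose]
    simp only [dotProduct, mulVec_diagonal, Function.comp_apply, RCLike.ofReal_real_eq_id, id]
    exact Finset.sum_congr rfl fun i _ => by ring
  · calc x ⬝ᵥ x = (x ᵥ* U) ⬝ᵥ (x ᵥ* U) := by
          rw [vecMul_dotProduct_vecMul, hUU, one_mulVec]
      _ = ∑ i, (Uᵀ *ᵥ x) i ^ 2 := by simp only [dotProduct, mulVec_transpose, sq]

lemma dotProduct_mulVec_le_iSup_eigenvalues_mul (hC : C.IsHermitian) (x : n → ℝ) :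
    x ⬝ᵥ (C *ᵥ x) ≤ (⨆ i, hC.eigenvalues i) * (x ⬝ᵥ x) := by
  obtain ⟨y, hCx, hx⟩ := hC.exists_dotProduct_mulVec_eq_sum_eigenvalues x
  rw [hCx, hx, Finset.mul_sum]
  exact Finset.sum_le_sum fun i _ => mul_le_mul_of_nonneg_right
    (le_ciSup (Set.finite_range _).bddAbove i) (sq_nonneg _)

lemma iInf_eigenvalues_mul_le_dotProduct_mulVec (hC : C.IsHermitian) (x : n → ℝ) :
    (⨅ i, hC.eigenvalues i) * (x ⬝ᵥ x) ≤ x ⬝ᵥ (C *ᵥ x) := by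
  obtain ⟨y, hCx, hx⟩ := hC.exists_dotProduct_mulVec_eq_sum_eigenvalues x
  rw [hCx, hx, Finset.mul_sum]
  exact Finset.sum_le_sum fun i _ => mul_le_mul_of_nonneg_right
    (ciInf_le (Set.finite_range _).bddBelow i) (sq_nonneg _)

end Matrix.IsHermitian

lemma le_of_sq_le_mul {t c : ℝ} (hc : 0 ≤ c) (h : t ^ 2 ≤ c * t) : t ≤ c := by
  by_contra! hlt
  nlinarith

section

variable [DecidableEq n]

lemma vecMul_dotProduct_vecMul_self_le_iSup_eigenvalues_mul (A : Matrix m n ℝ)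
    (h : (Aᵀ * A).IsHermitian) (x : m → ℝ) :
    (x ᵥ* A) ⬝ᵥ (x ᵥ* A) ≤ (⨆ i, h.eigenvalues i) * (x ⬝ᵥ x) := by
  set y := x ᵥ* A
  have hAy : (A *ᵥ y) ⬝ᵥ (A *ᵥ y) = y ⬝ᵥ ((Aᵀ * A) *ᵥ y) := by
    rw [← vecMul_transpose, vecMul_dotProduct_vecMul, transpose_transpose]
  have hcs := sq_dotProduct_le_dotProduct_self_mul_dotProduct_self x (A *ᵥ y)
  rw [dotProduct_mulVec, hAy] at hcs
  have hs : 0 ≤ ⨆ i, h.eigenvalues i :=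
    Real.iSup_nonneg (posSemidef_transpose_mul_self A).eigenvalues_nonneg
  refine le_of_sq_le_mul (mul_nonneg hs (dotProduct_self_nonneg x)) (hcs.trans ?_)
  calc (x ⬝ᵥ x) * (y ⬝ᵥ ((Aᵀ * A) *ᵥ y)) ≤ (x ⬝ᵥ x) * ((⨆ i, h.eigenvalues i) * (y ⬝ᵥ y)) :=
        mul_le_mul_of_nonneg_left (h.dotProduct_mulVec_le_iSup_eigenvalues_mul y)
          (dotProduct_self_nonneg x)
    _ = _ := by ring

lemma exists_vecMul_eq_and_iInf_eigenvalues_mul_le (A : Matrix m n ℝ)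
    (h : (Aᵀ * A).IsHermitian) (hpos : 0 < ⨅ i, h.eigenvalues i) (e : n → ℝ) :
    ∃ x : m → ℝ, x ᵥ* A = e ∧ (⨅ i, h.eigenvalues i) * (x ⬝ᵥ x) ≤ e ⬝ᵥ e := by
  set s := ⨅ i, h.eigenvalues i
  have hB : IsUnit (Aᵀ * A) := PosDef.isUnit <| h.posDef_iff_eigenvalues_pos.mpr fun i =>
    hpos.trans_le (ciInf_le (Set.finite_range _).bddBelow i)
  set w := (Aᵀ * A)⁻¹ *ᵥ e
  have hBw : (Aᵀ * A) *ᵥ w = e := by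
    rw [mulVec_mulVec, mul_nonsing_inv _ ((isUnit_iff_isUnit_det _).mp hB), one_mulVec]
  refine ⟨A *ᵥ w, by rw [← mulVec_transpose, mulVec_mulVec, hBw], ?_⟩
  have hxx : (A *ᵥ w) ⬝ᵥ (A *ᵥ w) = w ⬝ᵥ e := by
    rw [← vecMul_transpose, vecMul_dotProduct_vecMul, transpose_transpose, hBw]
  have hlow : s * (w ⬝ᵥ w) ≤ w ⬝ᵥ e := hBw ▸ h.iInf_eigenvalues_mul_le_dotProduct_mulVec w
  have hcs := sq_dotProduct_le_dotProduct_self_mul_dotProduct_self w e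
  rw [hxx]
  refine le_of_sq_le_mul (dotProduct_self_nonneg e) ?_
  nlinarith [mul_le_mul_of_nonneg_left hcs (mul_self_nonneg s),
    mul_le_mul_of_nonneg_left hlow (mul_nonneg hpos.le (dotProduct_self_nonneg e))]

theorem div_le_dotProduct_inv_mul_transpose_fromCols {p : Type*} [Fintype p] [DecidableEq p]
    [DecidableEq m] (A₁ : Matrix m n ℝ) (A₂ : Matrix m p ℝ)
    (h₁ : (A₁ᵀ * A₁).IsHermitian) (h₂ : (A₂ᵀ * A₂).IsHermitian)
    (hA : IsUnit (fromCols A₁ A₂ * (fromCols A₁ A₂)ᵀ)) (e : n → ℝ) (he : e ⬝ᵥ e = 1) :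
    (⨅ i, h₁.eigenvalues i) / ((⨅ i, h₁.eigenvalues i) + ⨆ i, h₂.eigenvalues i) ≤
      (A₁ *ᵥ e) ⬝ᵥ ((fromCols A₁ A₂ * (fromCols A₁ A₂)ᵀ)⁻¹ *ᵥ (A₁ *ᵥ e)) := by
  set A := fromCols A₁ A₂
  set v := A₁ *ᵥ e
  set Q := v ⬝ᵥ ((A * Aᵀ)⁻¹ *ᵥ v)
  set s₁ := ⨅ i, h₁.eigenvalues i
  set s₂ := ⨆ i, h₂.eigenvalues i
  have hQ : 0 ≤ Q := by
    have hM : (A * Aᵀ).PosSemidef := by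
      simpa only [conjTranspose_eq_transpose_of_trivial] using posSemidef_self_mul_conjTranspose A
    simpa only [star_trivial] using hM.inv.dotProduct_mulVec_nonneg v
  have hs₁ : 0 ≤ s₁ := Real.iInf_nonneg (posSemidef_transpose_mul_self A₁).eigenvalues_nonneg
  have hs₂ : 0 ≤ s₂ := Real.iSup_nonneg (posSemidef_transpose_mul_self A₂).eigenvalues_nonneg
  rcases hs₁.eq_or_lt with hzero | hpos
  · rw [← hzero, zero_div]
    exact hQ
  obtain ⟨x, hxA₁, hx⟩ := exists_vecMul_eq_and_iInf_eigenvalues_mul_le A₁ h₁ hpos e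
  have hvx : v ⬝ᵥ x = 1 := by rw [dotProduct_comm, dotProduct_mulVec, hxA₁, he]
  have hxA : (x ᵥ* A) ⬝ᵥ (x ᵥ* A) = 1 + (x ᵥ* A₂) ⬝ᵥ (x ᵥ* A₂) := by
    rw [vecMul_fromCols, sumElim_dotProduct_sumElim, hxA₁, he]
  have hvar := sq_dotProduct_le_dotProduct_inv_mulVec_mul A hA v x
  rw [hvx, hxA, one_pow] at hvar
  have hxA₂ := vecMul_dotProduct_vecMul_self_le_iSup_eigenvalues_mul A₂ h₂ x
  rw [he] at hx
  rw [div_le_iff₀ (by positivity)]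
  nlinarith [mul_le_mul_of_nonneg_left hvar hs₁, mul_le_mul_of_nonneg_left hxA₂ (mul_nonneg hQ hs₁),
    mul_le_mul_of_nonneg_left hx (mul_nonneg hQ hs₂)]

end

end

theorem block_projection_lower_bound_general (n d k : ℕ) (hd : 0 < d)
    (A₁ : Matrix (Fin n) (Fin d) ℝ) (A₂ : Matrix (Fin n) (Fin k) ℝ)
    (A : Matrix (Fin n) (Fin d ⊕ Fin k) ℝ) (hA : A = Matrix.fromCols A₁ A₂)
    (hinv : IsUnit (A * Aᵀ))
    (h₁ : (A₁ᵀ * A₁).IsHermitian) (h₂ : (A₂ᵀ * A₂).IsHermitian)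
    (sminSq smaxSq : ℝ)
    (hsmin : sminSq = ⨅ i, h₁.eigenvalues i)
    (hsmax : smaxSq = ⨆ i, h₂.eigenvalues i)
    (e₁ : Fin d ⊕ Fin k → ℝ)
    (he₁ : e₁ = fun j => if j = Sum.inl ⟨0, hd⟩ then 1 else 0) :
    sminSq / (sminSq + smaxSq) ≤ e₁ ⬝ᵥ (Aᵀ *ᵥ ((A * Aᵀ)⁻¹ *ᵥ (A *ᵥ e₁))) := by
  have he₁_single : e₁ = Pi.single (Sum.inl ⟨0, hd⟩) 1 := by
    rw [he₁]
    ext j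
    simp only [Pi.single_apply]
  have hAe₁ : A *ᵥ e₁ = A₁ *ᵥ Pi.single ⟨0, hd⟩ 1 := by
    ext i
    simp [he₁_single, hA]
  rw [dotProduct_mulVec, vecMul_transpose, hAe₁, hsmin, hsmax]
  subst hA
  exact div_le_dotProduct_inv_mul_transpose_fromCols A₁ A₂ h₁ h₂ hinv _ (by simp)

/-- block-matrix projection lower bound. With `A = [A₁ A₂]`,
`e₁ᵀ Aᵀ(AAᵀ)⁻¹A e₁ ≥ s_min(A₁)² / (s_min(A₁)² + s_max(A₂)²)`, where squared
singular values are the eigenvalues of the corresponding Gram matrices. -/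
theorem block_projection_lower_bound (n d k : ℕ) (hd : 0 < d) (hdn : d ≤ n)
    (A₁ : Matrix (Fin n) (Fin d) ℝ) (A₂ : Matrix (Fin n) (Fin k) ℝ)
    (hrank : A₁.rank = d)
    (A : Matrix (Fin n) (Fin d ⊕ Fin k) ℝ) (hA : A = Matrix.fromCols A₁ A₂)
    (hinv : IsUnit (A * Aᵀ))
    (h₁ : (A₁ᵀ * A₁).IsHermitian) (h₂ : (A₂ᵀ * A₂).IsHermitian)
    (sminSq smaxSq : ℝ)
    (hsmin : sminSq = ⨅ i, h₁.eigenvalues i)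
    (hsmax : smaxSq = ⨆ i, h₂.eigenvalues i)
    (e₁ : Fin d ⊕ Fin k → ℝ)
    (he₁ : e₁ = fun j => if j = Sum.inl ⟨0, hd⟩ then 1 else 0) :
    sminSq / (sminSq + smaxSq) ≤ e₁ ⬝ᵥ (Aᵀ *ᵥ ((A * Aᵀ)⁻¹ *ᵥ (A *ᵥ e₁))) :=
  block_projection_lower_bound_general n d k hd A₁ A₂ A hA hinv h₁ h₂ sminSq smaxSq hsmin hsmax e₁
    he₁
end

section
/- Let A ∈ ℝ^{n×p} with AA^⊤ invertible, let ε ∈ ℝ^n, and let β̂_A = A^⊤(AA^⊤)^{-1}(Aβ + ε). Then the risk satisfies the deterministic bound R(β̂_A) ≤ (pγ + 2)·(‖P_{(A^⊤)^⊥}β‖ + ‖A^⊤(AA^⊤)^{-1}ε‖)² + σ², where P_{(A^⊤)^⊥} = I_p − A^⊤(AA^⊤)^{-1}A is the orthogonal projection onto the orthogonal complement of the row space of A. -/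
/-!
The excess risk of `β̂_A` is the quadratic form of `Σ = WWᵀ + I` at the error `β̂_A - β`, and this
error is exactly `Aᵀ(AAᵀ)⁻¹ε - P_{(Aᵀ)⊥}β`. Since `WᵀW = pγ I`, Cauchy–Schwarz gives
`‖Wᵀx‖² ≤ pγ ‖x‖²`, so `Σ ≤ (pγ + 1) I`, and the triangle inequality bounds the error's norm.
-/

open Matrix

noncomputable section

/-- Squared Euclidean norm of a vector in `ℝ^k`. -/
def sqnorm {k : ℕ} (v : Fin k → ℝ) : ℝ := ∑ i, (v i) ^ 2

/-- Euclidean norm of a vector in `ℝ^k`. -/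
def enorm {k : ℕ} (v : Fin k → ℝ) : ℝ := Real.sqrt (sqnorm v)

/-- Ground-truth regression parameters `β = W (WᵀW + I)⁻¹ θ`. -/
def betaStar {d p : ℕ} (W : Matrix (Fin p) (Fin d) ℝ) (θ : Fin d → ℝ) : Fin p → ℝ :=
  W *ᵥ ((Wᵀ * W + 1)⁻¹ *ᵥ θ)

/-- Noise variance `σ² = θᵀ (WᵀW + I)⁻¹ θ`. -/
def sigmaSq {d p : ℕ} (W : Matrix (Fin p) (Fin d) ℝ) (θ : Fin d → ℝ) : ℝ :=
  θ ⬝ᵥ ((Wᵀ * W + 1)⁻¹ *ᵥ θ)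

/-- Risk: `R(b) = σ² + (b-β)ᵀ Σ (b-β)` with `Σ = W Wᵀ + I`. -/
def risk {d p : ℕ} (W : Matrix (Fin p) (Fin d) ℝ) (θ : Fin d → ℝ) (b : Fin p → ℝ) : ℝ :=
  sigmaSq W θ + (b - betaStar W θ) ⬝ᵥ ((W * Wᵀ + 1) *ᵥ (b - betaStar W θ))

open WithLp

lemma enorm_eq_norm_toLp {k : ℕ} (v : Fin k → ℝ) : _root_.enorm v = ‖toLp 2 v‖ := by
  simp [_root_.enorm, sqnorm, EuclideanSpace.norm_eq]

lemma enorm_sub_le_enorm_add_enorm {k : ℕ} (u v : Fin k → ℝ) :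
    _root_.enorm (u - v) ≤ _root_.enorm u + _root_.enorm v := by
  simpa only [enorm_eq_norm_toLp, toLp_sub] using norm_sub_le (toLp 2 u) (toLp 2 v)

section

variable {m n : Type*} [Fintype m] [Fintype n]

lemma dotProduct_self_eq_norm_toLp_sq (v : n → ℝ) : v ⬝ᵥ v = ‖toLp 2 v‖ ^ 2 := by
  rw [← real_inner_self_eq_norm_sq, EuclideanSpace.inner_toLp_toLp, star_trivial]

lemma dotProduct_le_norm_toLp_mul_norm_toLp (u v : n → ℝ) :
    u ⬝ᵥ v ≤ ‖toLp 2 u‖ * ‖toLp 2 v‖ := by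
  simpa only [EuclideanSpace.inner_toLp_toLp, star_trivial, dotProduct_comm v u] using
    real_inner_le_norm (toLp 2 u) (toLp 2 v)

lemma norm_toLp_transpose_mulVec_sq_le [DecidableEq n] {W : Matrix m n ℝ} {c : ℝ} (hc : 0 ≤ c)
    (hW : Wᵀ * W = c • 1) (x : m → ℝ) :
    ‖toLp 2 (Wᵀ *ᵥ x)‖ ^ 2 ≤ c * ‖toLp 2 x‖ ^ 2 := by
  set z := Wᵀ *ᵥ x
  have hz : ‖toLp 2 z‖ ^ 2 = x ⬝ᵥ W *ᵥ z := by
    rw [← dotProduct_self_eq_norm_toLp_sq, dotProduct_mulVec, vecMul_transpose, dotProduct_comm]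
  have hWz : ‖toLp 2 (W *ᵥ z)‖ ^ 2 = c * ‖toLp 2 z‖ ^ 2 := by
    rw [← dotProduct_self_eq_norm_toLp_sq, ← dotProduct_self_eq_norm_toLp_sq, dotProduct_mulVec,
      ← mulVec_transpose, mulVec_mulVec, hW, smul_mulVec, one_mulVec, smul_dotProduct, smul_eq_mul]
  have hcs := dotProduct_le_norm_toLp_mul_norm_toLp x (W *ᵥ z)
  rw [← hz] at hcs
  have hsq := pow_le_pow_left₀ (sq_nonneg _) hcs 2
  rw [mul_pow, hWz] at hsq
  rcases (sq_nonneg ‖toLp 2 z‖).eq_or_lt with h0 | hpos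
  · rw [← h0]; positivity
  · nlinarith

end

lemma risk_le_of_transpose_mul_self_eq_smul {d p : ℕ} {W : Matrix (Fin p) (Fin d) ℝ} {c : ℝ}
    (hc : 0 ≤ c) (hW : Wᵀ * W = c • 1) (θ : Fin d → ℝ) (b : Fin p → ℝ) :
    risk W θ b ≤ sigmaSq W θ + (c + 1) * _root_.enorm (b - betaStar W θ) ^ 2 := by
  set e := b - betaStar W θ
  have hquad : e ⬝ᵥ (W * Wᵀ + 1) *ᵥ e = ‖toLp 2 (Wᵀ *ᵥ e)‖ ^ 2 + ‖toLp 2 e‖ ^ 2 := by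
    rw [add_mulVec, one_mulVec, dotProduct_add, ← mulVec_mulVec, dotProduct_mulVec,
      ← mulVec_transpose, dotProduct_self_eq_norm_toLp_sq, dotProduct_self_eq_norm_toLp_sq]
  rw [risk, hquad, enorm_eq_norm_toLp]
  linarith [norm_toLp_transpose_mulVec_sq_le hc hW e]

theorem risk_deterministic_bound_general (d n p : ℕ)
    (γ : ℝ) (hγ : 0 < γ) (θ : Fin d → ℝ) (W : Matrix (Fin p) (Fin d) ℝ)
    (hW : Wᵀ * W = ((p : ℝ) * γ) • (1 : Matrix (Fin d) (Fin d) ℝ))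
    (A : Matrix (Fin n) (Fin p) ℝ) (ε : Fin n → ℝ) :
    risk W θ (Aᵀ *ᵥ ((A * Aᵀ)⁻¹ *ᵥ (A *ᵥ betaStar W θ + ε))) ≤
      ((p : ℝ) * γ + 2) *
        (_root_.enorm (betaStar W θ - Aᵀ *ᵥ ((A * Aᵀ)⁻¹ *ᵥ (A *ᵥ betaStar W θ))) + _root_.enorm (Aᵀ *ᵥ ((A * Aᵀ)⁻¹ *ᵥ ε))) ^ 2 + sigmaSq W θ := by
  set β := betaStar W θ
  set u := β - Aᵀ *ᵥ ((A * Aᵀ)⁻¹ *ᵥ (A *ᵥ β))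
  set v := Aᵀ *ᵥ ((A * Aᵀ)⁻¹ *ᵥ ε)
  have hc : 0 ≤ (p : ℝ) * γ := by positivity
  have herr : Aᵀ *ᵥ ((A * Aᵀ)⁻¹ *ᵥ (A *ᵥ β + ε)) - β = v - u := by
    simp only [u, v, mulVec_add]
    abel
  have hle : _root_.enorm (v - u) ≤ _root_.enorm u + _root_.enorm v :=
    (enorm_sub_le_enorm_add_enorm v u).trans_eq (add_comm _ _)
  have hnonneg : 0 ≤ _root_.enorm (v - u) := Real.sqrt_nonneg _
  calc _ ≤ sigmaSq W θ + ((p : ℝ) * γ + 1) * _root_.enorm (v - u) ^ 2 := by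
        rw [← herr]; exact risk_le_of_transpose_mul_self_eq_smul hc hW θ _
    _ ≤ _ := by nlinarith [pow_le_pow_left₀ hnonneg hle 2, sq_nonneg (_root_.enorm (v - u))]

/-- deterministic risk bound
`R(β̂_A) ≤ (pγ+2)(‖P_{(Aᵀ)⊥}β‖ + ‖Aᵀ(AAᵀ)⁻¹ε‖)² + σ²`. -/
theorem risk_deterministic_bound (d n p : ℕ) (hd : 0 < d) (hn : 0 < n) (hp : 0 < p)
    (γ : ℝ) (hγ : 0 < γ) (θ : Fin d → ℝ) (W : Matrix (Fin p) (Fin d) ℝ)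
    (hW : Wᵀ * W = ((p : ℝ) * γ) • (1 : Matrix (Fin d) (Fin d) ℝ))
    (A : Matrix (Fin n) (Fin p) ℝ) (hA : IsUnit (A * Aᵀ)) (ε : Fin n → ℝ) :
    risk W θ (Aᵀ *ᵥ ((A * Aᵀ)⁻¹ *ᵥ (A *ᵥ betaStar W θ + ε))) ≤
      ((p : ℝ) * γ + 2) *
        (_root_.enorm (betaStar W θ - Aᵀ *ᵥ ((A * Aᵀ)⁻¹ *ᵥ (A *ᵥ betaStar W θ))) + _root_.enorm (Aᵀ *ᵥ ((A * Aᵀ)⁻¹ *ᵥ ε))) ^ 2 + sigmaSq W θ :=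
  risk_deterministic_bound_general d n p γ hγ θ W hW A ε
end
end
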